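/- Setting z = x + y, for all w₁, w₂ ∈ 𝔥 one has w₁z ⊛̃ w₂z = -(w₁ * w₂)z. -/

import Mathlib

open scoped BigOperators

abbrev Ltr := Fin 2

/-- `𝔥 = ℚ⟨x,y⟩`, realized as the monoid algebra of the free monoid on two letters. -/
abbrev H := MonoidAlgebra ℚ (FreeMonoid Ltr)

/-- The word `u₁⋯u_m` as an element of `𝔥`. -/
noncomputable def wrd (l : List Ltr) : H := MonoidAlgebra.of ℚ (FreeMonoid Ltr) (FreeMonoid.ofList l)

/-- The generator `x`. -/
noncomputable def Xh : H := wrd [0]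
/-- The generator `y`. -/
noncomputable def Yh : H := wrd [1]

/-- `e₀ = x`, `e₁ = -y`. -/
noncomputable def eH (a : Ltr) : H := if a = 0 then Xh else -Yh

/-- The product `e_{a₁}⋯e_{a_m} ∈ 𝔥` for an `e`-word. -/
noncomputable def ew (l : List Ltr) : H := ((-1 : ℚ) ^ (l.count 1)) • wrd l

/-- The symmetric harmonic product on basis `e`-words:
`e_a ⊛̃ e_{b₁}⋯e_{bₙ} = e_{b₁}⋯e_{bₙ} ⊛̃ e_a = e_{ab₁}⋯e_{abₙ}` and
`e_a w₁ ⊛̃ e_b w₂ = e_{ab}(w₁ ⊛̃ e_b w₂) + e_{ab}(e_a w₁ ⊛̃ w₂) - e_{ab}e₀(w₁ ⊛̃ w₂)`. -/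
noncomputable def mstE : List Ltr → List Ltr → H
  | [a], b :: bs => ew ((b :: bs).map (fun c => a * c))
  | a :: a' :: as, [b] => ew ((a :: a' :: as).map (fun c => c * b))
  | a :: a' :: as, b :: b' :: bs =>
      eH (a * b) * mstE (a' :: as) (b :: b' :: bs)
      + eH (a * b) * mstE (a :: a' :: as) (b' :: bs)
      - eH (a * b) * Xh * mstE (a' :: as) (b' :: bs)
  | _, _ => 0
termination_by l₁ l₂ => l₁.length + l₂.length

/-- The symmetric harmonic product `⊛̃ : 𝔥' ⊗ 𝔥' → 𝔥'`, extended bilinearly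
(using that the word `u₁⋯u_m` equals `(-1)^{#{i : uᵢ = y}} e_{u₁}⋯e_{u_m}`). -/
noncomputable def mst (f g : H) : H :=
  f.coeff.sum fun u cu => g.coeff.sum fun v cv =>
    (cu * cv * (-1 : ℚ) ^ ((FreeMonoid.toList u).count 1)
      * (-1 : ℚ) ^ ((FreeMonoid.toList v).count 1)) •
      mstE (FreeMonoid.toList u) (FreeMonoid.toList v)

/-- Letter produced when stuffling letters `u, v`: `y` iff both are `y`, else `x`. -/
noncomputable def ellt (a b : Ltr) : H := if a = 1 ∧ b = 1 then Yh else Xh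
def cc1 (a b : Ltr) : ℚ := if a = 1 ∧ b = 0 then -1 else 1
def cc2 (a b : Ltr) : ℚ := if a = 0 ∧ b = 1 then -1 else 1
def cc3 (a b : Ltr) : ℚ := if a = 0 ∧ b = 0 then -1 else 1

/-- The harmonic (stuffle) product on words of `𝔥`: on `𝔥¹` it is Hoffman's harmonic
product defined by `w*1 = 1*w = w` and
`z_k w₁ * z_l w₂ = z_k(w₁ * z_l w₂) + z_l(z_k w₁ * w₂) + z_{k+l}(w₁ * w₂)` with
`z_n = yx^{n-1}`, extended to all of `𝔥` (compatibly, via `w₁e₁ ⊛̃ w₂e₁ = (w₁*w₂)e₁`). -/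
noncomputable def starW : List Ltr → List Ltr → H
  | [], v => wrd v
  | u, [] => wrd u
  | a :: u, b :: v =>
      cc1 a b • (ellt a b * starW u (b :: v)) + cc2 a b • (ellt a b * starW (a :: u) v)
      + cc3 a b • (ellt a b * Xh * starW u v)
termination_by u v => u.length + v.length

/-- The harmonic product `*` on `𝔥`, extended bilinearly. -/
noncomputable def star (f g : H) : H :=
  f.coeff.sum fun u cu => g.coeff.sum fun v cv => (cu * cv) • starW u.toList v.toList

/-!
By bilinearity it suffices to treat words. Rewritten in the basis of `e`-words
(`e_p = ±p`), the harmonic product obeys exactly the recursion defining `⊛̃`: the signs of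
`cc1, cc2, cc3` and of `e₁ = -y` combine into the single factor `e_{ab}`. Since
`z = x + y = e₀ - e₁`, both `e_p z ⊛̃ e_q z` and `-(e_p * e_q) z` then satisfy the same
recursion in `(p, q)`, and they agree when `p` or `q` is empty, where `⊛̃` with a single
letter only relabels letters; induction on `p` and `q` concludes.
-/

def eps (l : List Ltr) : ℚ := (-1) ^ l.count 1

lemma eps_nil : eps [] = 1 := rfl

lemma eps_cons (a : Ltr) (l : List Ltr) : eps (a :: l) = eps [a] * eps l := by
  simp only [eps, List.count_cons, List.count_nil, zero_add, pow_add, mul_comm]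

lemma eps_mul_self (l : List Ltr) : eps l * eps l = 1 := by
  rw [eps, ← mul_pow]; norm_num

lemma wrd_append (u v : List Ltr) : wrd (u ++ v) = wrd u * wrd v := by
  simp [wrd]

lemma single_eq_smul_wrd (u : FreeMonoid Ltr) (c : ℚ) :
    MonoidAlgebra.single u c = c • wrd u.toList := by
  simp [wrd, MonoidAlgebra.of_apply]

lemma ew_eq_smul_wrd (l : List Ltr) : ew l = eps l • wrd l := rfl

lemma ew_append_singleton (l : List Ltr) (a : Ltr) : ew (l ++ [a]) = ew l * eH a := by
  fin_cases a <;>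
    simp [ew, eH, Xh, Yh, wrd_append, List.count_append, pow_succ]

lemma add_eq_eH_sub_eH : Xh + Yh = eH 0 - eH 1 := by
  simp [eH, sub_eq_add_neg]

lemma mst_wrd_wrd (u v : List Ltr) :
    mst (wrd u) (wrd v) = (eps u * eps v) • mstE u v := by
  simp only [mst, wrd, MonoidAlgebra.of_apply, MonoidAlgebra.coeff_single]
  rw [Finsupp.sum_single_index, Finsupp.sum_single_index] <;> simp [eps]

lemma mst_zero_left (g : H) : mst 0 g = 0 := by simp [mst]

lemma mst_zero_right (f : H) : mst f 0 = 0 := by simp [mst]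

lemma mst_add_left (f f' g : H) : mst (f + f') g = mst f g + mst f' g := by
  unfold mst
  rw [MonoidAlgebra.coeff_add, Finsupp.sum_add_index' (by simp)]
  intro u c c'
  simp only [add_mul, add_smul, Finsupp.sum_add]

lemma mst_add_right (f g g' : H) : mst f (g + g') = mst f g + mst f g' := by
  unfold mst
  rw [← Finsupp.sum_add]
  refine Finsupp.sum_congr fun u _ => ?_
  rw [MonoidAlgebra.coeff_add, Finsupp.sum_add_index' (by simp)]
  intro v c c'
  simp only [mul_add, add_mul, add_smul]

lemma mst_smul_left (c : ℚ) (f g : H) : mst (c • f) g = c • mst f g := by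
  unfold mst
  rw [MonoidAlgebra.coeff_smul, Finsupp.sum_smul_index (by simp), Finsupp.smul_sum]
  refine Finsupp.sum_congr fun u _ => ?_
  rw [Finsupp.smul_sum]
  refine Finsupp.sum_congr fun v _ => ?_
  rw [smul_smul]; ring_nf

lemma mst_smul_right (c : ℚ) (f g : H) : mst f (c • g) = c • mst f g := by
  unfold mst
  rw [Finsupp.smul_sum]
  refine Finsupp.sum_congr fun u _ => ?_
  rw [MonoidAlgebra.coeff_smul, Finsupp.sum_smul_index (by simp), Finsupp.smul_sum]
  refine Finsupp.sum_congr fun v _ => ?_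
  rw [smul_smul]; ring_nf

lemma star_zero_left (g : H) : _root_.star 0 g = 0 := by simp [_root_.star]

lemma star_zero_right (f : H) : _root_.star f 0 = 0 := by simp [_root_.star]

lemma star_add_left (f f' g : H) :
    _root_.star (f + f') g = _root_.star f g + _root_.star f' g := by
  unfold _root_.star
  rw [MonoidAlgebra.coeff_add, Finsupp.sum_add_index' (by simp)]
  intro u c c'
  simp only [add_mul, add_smul, Finsupp.sum_add]

lemma star_add_right (f g g' : H) :
    _root_.star f (g + g') = _root_.star f g + _root_.star f g' := by
  unfold _root_.star
  rw [← Finsupp.sum_add]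
  refine Finsupp.sum_congr fun u _ => ?_
  rw [MonoidAlgebra.coeff_add, Finsupp.sum_add_index' (by simp)]
  intro v c c'
  simp only [mul_add, add_smul]

lemma star_single_single (u v : FreeMonoid Ltr) (c d : ℚ) :
    _root_.star (MonoidAlgebra.single u c) (MonoidAlgebra.single v d)
      = (c * d) • starW u.toList v.toList := by
  simp only [_root_.star, MonoidAlgebra.coeff_single]
  rw [Finsupp.sum_single_index, Finsupp.sum_single_index] <;> simp

lemma mstE_singleton_left (a : Ltr) {l : List Ltr} (hl : l ≠ []) :
    mstE [a] l = ew (l.map (a * ·)) := by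
  obtain ⟨b, bs, rfl⟩ := List.exists_cons_of_ne_nil hl
  rw [mstE]

lemma mstE_singleton_right (b : Ltr) {l : List Ltr} (hl : l ≠ []) :
    mstE l [b] = ew (l.map (· * b)) := by
  obtain ⟨a, as, rfl⟩ := List.exists_cons_of_ne_nil hl
  cases as with
  | nil => simp [mstE, mul_comm]
  | cons a' as => rw [mstE]

lemma mstE_cons_cons (a b : Ltr) {p q : List Ltr} (hp : p ≠ []) (hq : q ≠ []) :
    mstE (a :: p) (b :: q)
      = eH (a * b) * mstE p (b :: q) + eH (a * b) * mstE (a :: p) q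
        - eH (a * b) * Xh * mstE p q := by
  obtain ⟨a', as, rfl⟩ := List.exists_cons_of_ne_nil hp
  obtain ⟨b', bs, rfl⟩ := List.exists_cons_of_ne_nil hq
  rw [mstE]

lemma starW_nil_left (v : List Ltr) : starW [] v = wrd v := by rw [starW]

lemma starW_nil_right (u : List Ltr) : starW u [] = wrd u := by
  cases u with
  | nil => rw [starW]
  | cons a u => rw [starW]; simp

lemma starW_cons_cons (a b : Ltr) (u v : List Ltr) :
    starW (a :: u) (b :: v)
      = cc1 a b • (ellt a b * starW u (b :: v)) + cc2 a b • (ellt a b * starW (a :: u) v)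
        + cc3 a b • (ellt a b * Xh * starW u v) := by
  rw [starW]

/-- `e_p * e_q`: the harmonic product in the basis of `e`-words. -/
noncomputable def starE (p q : List Ltr) : H := (eps p * eps q) • starW p q

lemma starE_nil_left (q : List Ltr) : starE [] q = ew q := by
  simp [starE, eps_nil, starW_nil_left, ew_eq_smul_wrd]

lemma starE_nil_right (p : List Ltr) : starE p [] = ew p := by
  simp [starE, eps_nil, starW_nil_right, ew_eq_smul_wrd]

lemma starE_cons_cons (a b : Ltr) (p q : List Ltr) :
    starE (a :: p) (b :: q)
      = eH (a * b) * starE p (b :: q) + eH (a * b) * starE (a :: p) q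
        - eH (a * b) * Xh * starE p q := by
  simp only [starE, starW_cons_cons, eps_cons a p, eps_cons b q]
  fin_cases a <;> fin_cases b <;>
    simp [eH, ellt, cc1, cc2, cc3, eps, smul_add, mul_assoc] <;> module

/-- `e_p z ⊛̃ e_q z`, expanded bilinearly with `z = e₀ - e₁`. -/
noncomputable def mstEZ (p q : List Ltr) : H :=
  mstE (p ++ [0]) (q ++ [0]) - mstE (p ++ [0]) (q ++ [1])
    - mstE (p ++ [1]) (q ++ [0]) + mstE (p ++ [1]) (q ++ [1])

lemma mst_wrd_mul_add_eq_smul_mstEZ (p q : List Ltr) :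
    mst (wrd p * (Xh + Yh)) (wrd q * (Xh + Yh)) = (eps p * eps q) • mstEZ p q := by
  simp only [Xh, Yh, mul_add, ← wrd_append, mst_add_left, mst_add_right, mst_wrd_wrd, mstEZ,
    eps, List.count_append, List.count_singleton, pow_add]
  match_scalars <;> norm_num

lemma mstEZ_nil_left (q : List Ltr) : mstEZ [] q = -(starE [] q * (Xh + Yh)) := by
  have hz : (q ++ [0]).map (0 * ·) = (q ++ [1]).map (0 * ·) := by simp
  simp only [mstEZ, List.nil_append, mstE_singleton_left _ (List.append_ne_nil_of_right_ne_nil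
    _ (List.cons_ne_nil _ _)), hz, one_mul, List.map_id', starE_nil_left,
    ew_append_singleton, add_eq_eH_sub_eH]
  noncomm_ring

lemma mstEZ_nil_right (p : List Ltr) : mstEZ p [] = -(starE p [] * (Xh + Yh)) := by
  have hz : (p ++ [0]).map (· * 0) = (p ++ [1]).map (· * 0) := by simp
  simp only [mstEZ, List.nil_append, mstE_singleton_right _ (List.append_ne_nil_of_right_ne_nil
    _ (List.cons_ne_nil _ _)), hz, mul_one, List.map_id', starE_nil_right,
    ew_append_singleton, add_eq_eH_sub_eH]
  noncomm_ring

lemma mstEZ_cons_cons (a b : Ltr) (p q : List Ltr) :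
    mstEZ (a :: p) (b :: q)
      = eH (a * b) * mstEZ p (b :: q) + eH (a * b) * mstEZ (a :: p) q
        - eH (a * b) * Xh * mstEZ p q := by
  simp only [mstEZ, List.cons_append,
    mstE_cons_cons a b (List.append_ne_nil_of_right_ne_nil _ (List.cons_ne_nil _ _))
      (List.append_ne_nil_of_right_ne_nil _ (List.cons_ne_nil _ _)), mul_add, mul_sub]
  abel

lemma mstEZ_eq_neg_starE_mul (p q : List Ltr) : mstEZ p q = -(starE p q * (Xh + Yh)) := by
  induction p generalizing q with
  | nil => exact mstEZ_nil_left q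
  | cons a p ihp =>
    induction q with
    | nil => exact mstEZ_nil_right _
    | cons b q ihq =>
      rw [mstEZ_cons_cons, starE_cons_cons, ihp, ihq, ihp]
      noncomm_ring

lemma mst_wrd_mul_add_eq_neg_starW_mul (p q : List Ltr) :
    mst (wrd p * (Xh + Yh)) (wrd q * (Xh + Yh)) = -(starW p q * (Xh + Yh)) := by
  rw [mst_wrd_mul_add_eq_smul_mstEZ, mstEZ_eq_neg_starE_mul, starE, smul_mul_assoc, smul_neg,
    smul_smul, mul_mul_mul_comm, eps_mul_self, eps_mul_self, one_mul, one_smul]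

/-- With `z = x + y`, for all `w₁, w₂ ∈ 𝔥`:
`w₁z ⊛̃ w₂z = -(w₁ * w₂)z`. -/
theorem stmt6 (w₁ w₂ : H) :
    mst (w₁ * (Xh + Yh)) (w₂ * (Xh + Yh)) = -(star w₁ w₂ * (Xh + Yh)) := by
  induction w₁ using MonoidAlgebra.induction_linear with
  | zero => simp [mst_zero_left, star_zero_left]
  | add f f' hf hf' => rw [add_mul, mst_add_left, hf, hf', star_add_left, add_mul, neg_add]
  | single u c =>
    induction w₂ using MonoidAlgebra.induction_linear with
    | zero => simp [mst_zero_right, star_zero_right]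
    | add g g' hg hg' => rw [add_mul, mst_add_right, hg, hg', star_add_right, add_mul, neg_add]
    | single v d =>
      rw [star_single_single, single_eq_smul_wrd, single_eq_smul_wrd, smul_mul_assoc,
        smul_mul_assoc, mst_smul_left, mst_smul_right, mst_wrd_mul_add_eq_neg_starW_mul,
        smul_smul, smul_neg, smul_mul_assoc]
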